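/- arXiv:2302.03529 — 4 statements merged into one kernel-verified Lean document; each statement's English description precedes it below -/
import Mathlib

section
/- For all real numbers μ, a01, b01, c010, c011, c001, c101, c0101, c0110: if the matrix M1(μ, a01, b01, c010, c011, c001, c101, c0101, c0110) is positive semidefinite, then μ ≤ 0. -/
noncomputable def M1 (μ a01 b01 c010 c011 c001 c101 c0101 c0110 : ℝ) :
    Matrix (Fin 9) (Fin 9) ℝ :=
  !![1, 1/2, (4-μ)/6, 1/2, 1/2, (μ+2)/6, (μ+2)/6, 1/2, (1-μ)/6;
     1/2, 1/2, a01, (μ+2)/6, (μ+2)/6, (μ+2)/6, (μ+2)/6, c010, c011;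
     (4-μ)/6, a01, (4-μ)/6, 1/2, (1-μ)/6, c010, c011, 1/2, (1-μ)/6;
     1/2, (μ+2)/6, 1/2, 1/2, b01, (μ+2)/6, c001, 1/2, c101;
     1/2, (μ+2)/6, (1-μ)/6, b01, 1/2, c001, (μ+2)/6, c101, (1-μ)/6;
     (μ+2)/6, (μ+2)/6, c010, (μ+2)/6, c001, (μ+2)/6, c001, c010, c0101;
     (μ+2)/6, (μ+2)/6, c011, c001, (μ+2)/6, c001, (μ+2)/6, c0110, c011;
     1/2, c010, 1/2, 1/2, c101, c010, c0110, 1/2, c101;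
     (1-μ)/6, c011, (1-μ)/6, c101, (1-μ)/6, c0101, c011, c101, (1-μ)/6]

/-! The vectors `e₄ - e₈` and `e₁ - e₃ - e₅ + e₉` are null for the quadratic form of `M1`, so
positive semidefiniteness puts them in its kernel; the second row of `M1` applied to them forces
`c010 = (μ + 2) / 6` and `c011 = a01 + (μ - 1) / 6`. With these values the quadratic form at
`k = e₁ - e₂ - e₃ - e₅ + e₆ + e₇` is `-μ / 2`, which must be nonnegative. -/

open Matrix

lemma Matrix.PosSemidef.mulVec_eq_zero_of_dotProduct_mulVec_self {n : Type*} [Fintype n]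
    {A : Matrix n n ℝ} (hA : A.PosSemidef) {v : n → ℝ} (hv : v ⬝ᵥ A *ᵥ v = 0) : A *ᵥ v = 0 :=
  (hA.dotProduct_mulVec_zero_iff v).1 (by simpa using hv)

section M1

variable {μ a01 b01 c010 c011 c001 c101 c0101 c0110 : ℝ}

lemma M1_c010_eq_of_posSemidef
    (h : (M1 μ a01 b01 c010 c011 c001 c101 c0101 c0110).PosSemidef) : c010 = (μ + 2) / 6 := by
  have hker := h.mulVec_eq_zero_of_dotProduct_mulVec_self (v := ![0, 0, 0, 1, 0, 0, 0, -1, 0])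
    (by simp [M1, mulVec, dotProduct, Fin.sum_univ_succ])
  have hrow : (μ + 2) / 6 - c010 = 0 := by
    simpa [M1, mulVec, dotProduct, Fin.sum_univ_succ, sub_eq_add_neg, add_assoc]
      using congrFun hker 1
  linarith

lemma M1_c011_eq_of_posSemidef
    (h : (M1 μ a01 b01 c010 c011 c001 c101 c0101 c0110).PosSemidef) :
    c011 = a01 + (μ - 1) / 6 := by
  have hker := h.mulVec_eq_zero_of_dotProduct_mulVec_self (v := ![1, 0, -1, 0, -1, 0, 0, 0, 1])
    (by simp [M1, mulVec, dotProduct, Fin.sum_univ_succ]; ring)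
  have hrow : 1 / 2 - a01 - (μ + 2) / 6 + c011 = 0 := by
    simpa [M1, mulVec, dotProduct, Fin.sum_univ_succ, sub_eq_add_neg, add_assoc]
      using congrFun hker 1
  linarith

lemma M1_dotProduct_mulVec_witness :
    ![1, -1, -1, 0, -1, 1, 1, 0, 0] ⬝ᵥ
        M1 μ a01 b01 c010 c011 c001 c101 c0101 c0110 *ᵥ ![1, -1, -1, 0, -1, 1, 1, 0, 0] =
      1 / 3 + μ / 6 + 2 * a01 - 2 * c010 - 2 * c011 := by
  simp [M1, mulVec, dotProduct, Fin.sum_univ_succ]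
  ring

end M1

theorem stmt0 (μ a01 b01 c010 c011 c001 c101 c0101 c0110 : ℝ)
    (h : (M1 μ a01 b01 c010 c011 c001 c101 c0101 c0110).PosSemidef) :
    μ ≤ 0 := by
  have hk := h.dotProduct_mulVec_nonneg ![1, -1, -1, 0, -1, 1, 1, 0, 0]
  rw [star_trivial, M1_dotProduct_mulVec_witness, M1_c010_eq_of_posSemidef h,
    M1_c011_eq_of_posSemidef h] at hk
  linarith
end

section
/- The 9×9 real symmetric matrix M1(0, 1/3, 1/6, 1/3, 1/6, 1/6, 1/6, 1/6, 1/6), i.e. M1 with μ = 0, a01 = 1/3, b01 = 1/6, c010 = 1/3, c011 = 1/6, c001 = 1/6, c101 = 1/6, c0101 = 1/6, c0110 = 1/6, is positive semidefinite. In particular, the point l1(0) = L belongs to the Almost Quantum set. -/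
set_option maxHeartbeats 2000000

noncomputable def Wmat : Matrix (Fin 6) (Fin 9) ℝ :=
  !![1, 0, 0, 0, 1, 0, 0, 0, 0;
     1, 0, 1, 0, 0, 0, 0, 0, 0;
     1, 0, 1, 1, 0, 0, 0, 1, 0;
     1, 1, 0, 0, 1, 0, 1, 0, 0;
     1, 1, 1, 1, 0, 1, 0, 1, 0;
     1, 1, 1, 1, 1, 1, 1, 1, 1]

noncomputable def Wtmat : Matrix (Fin 9) (Fin 6) ℝ :=
  !![1, 1, 1, 1, 1, 1;
     0, 0, 0, 1, 1, 1;
     0, 1, 1, 0, 1, 1;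
     0, 0, 1, 0, 1, 1;
     1, 0, 0, 1, 0, 1;
     0, 0, 0, 0, 1, 1;
     0, 0, 0, 1, 0, 1;
     0, 0, 1, 0, 1, 1;
     0, 0, 0, 0, 0, 1]

section aux
variable {α : Type*}

lemma cv9_5 (x : α) (u : Fin 8 → α) : Matrix.vecCons x u (5 : Fin 9) = u 4 := rfl
lemma cv9_6 (x : α) (u : Fin 8 → α) : Matrix.vecCons x u (6 : Fin 9) = u 5 := rfl
lemma cv9_7 (x : α) (u : Fin 8 → α) : Matrix.vecCons x u (7 : Fin 9) = u 6 := rfl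
lemma cv9_8 (x : α) (u : Fin 8 → α) : Matrix.vecCons x u (8 : Fin 9) = u 7 := rfl
lemma cv8_4 (x : α) (u : Fin 7 → α) : Matrix.vecCons x u (4 : Fin 8) = u 3 := rfl
lemma cv8_5 (x : α) (u : Fin 7 → α) : Matrix.vecCons x u (5 : Fin 8) = u 4 := rfl
lemma cv8_6 (x : α) (u : Fin 7 → α) : Matrix.vecCons x u (6 : Fin 8) = u 5 := rfl
lemma cv8_7 (x : α) (u : Fin 7 → α) : Matrix.vecCons x u (7 : Fin 8) = u 6 := rfl
lemma cv7_3 (x : α) (u : Fin 6 → α) : Matrix.vecCons x u (3 : Fin 7) = u 2 := rfl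
lemma cv7_4 (x : α) (u : Fin 6 → α) : Matrix.vecCons x u (4 : Fin 7) = u 3 := rfl
lemma cv7_5 (x : α) (u : Fin 6 → α) : Matrix.vecCons x u (5 : Fin 7) = u 4 := rfl
lemma cv7_6 (x : α) (u : Fin 6 → α) : Matrix.vecCons x u (6 : Fin 7) = u 5 := rfl
lemma cv6_2 (x : α) (u : Fin 5 → α) : Matrix.vecCons x u (2 : Fin 6) = u 1 := rfl
lemma cv6_3 (x : α) (u : Fin 5 → α) : Matrix.vecCons x u (3 : Fin 6) = u 2 := rfl
lemma cv6_4 (x : α) (u : Fin 5 → α) : Matrix.vecCons x u (4 : Fin 6) = u 3 := rfl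
lemma cv6_5 (x : α) (u : Fin 5 → α) : Matrix.vecCons x u (5 : Fin 6) = u 4 := rfl
lemma cv5_2 (x : α) (u : Fin 4 → α) : Matrix.vecCons x u (2 : Fin 5) = u 1 := rfl
lemma cv5_3 (x : α) (u : Fin 4 → α) : Matrix.vecCons x u (3 : Fin 5) = u 2 := rfl
lemma cv5_4 (x : α) (u : Fin 4 → α) : Matrix.vecCons x u (4 : Fin 5) = u 3 := rfl
lemma cv4_2 (x : α) (u : Fin 3 → α) : Matrix.vecCons x u (2 : Fin 4) = u 1 := rfl
lemma cv4_3 (x : α) (u : Fin 3 → α) : Matrix.vecCons x u (3 : Fin 4) = u 2 := rfl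
lemma cv3_2 (x : α) (u : Fin 2 → α) : Matrix.vecCons x u (2 : Fin 3) = u 1 := rfl

end aux

lemma hWt : Wmat.conjTranspose = Wtmat := by
  ext i j
  fin_cases i <;> fin_cases j <;> simp [Wmat, Wtmat, cv9_5, cv9_6, cv9_7, cv9_8, cv8_4, cv8_5, cv8_6, cv8_7, cv7_3, cv7_4, cv7_5, cv7_6, cv6_2, cv6_3, cv6_4, cv6_5, cv5_2, cv5_3, cv5_4, cv4_2, cv4_3, cv3_2, Matrix.vecHead, Matrix.vecTail, Function.comp]

theorem stmt1 :
    (M1 0 (1/3) (1/6) (1/3) (1/6) (1/6) (1/6) (1/6) (1/6)).PosSemidef := by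
  have hd : (Matrix.diagonal (fun _ : Fin 6 => (1/6 : ℝ))).PosSemidef := by
    rw [Matrix.posSemidef_diagonal_iff]
    intro i; norm_num
  have h := hd.mul_mul_conjTranspose_same Wmat.conjTranspose
  rw [Matrix.conjTranspose_conjTranspose, hWt] at h
  have key : M1 0 (1/3) (1/6) (1/3) (1/6) (1/6) (1/6) (1/6) (1/6)
      = Wtmat * Matrix.diagonal (fun _ : Fin 6 => (1/6 : ℝ)) * Wmat := by
    rw [Matrix.mul_assoc]
    ext i j
    fin_cases i <;> fin_cases j <;>
      simp [M1, Wmat, Wtmat, Matrix.mul_apply, Matrix.diagonal_apply,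
        Fin.sum_univ_succ, cv9_5, cv9_6, cv9_7, cv9_8, cv8_4, cv8_5, cv8_6, cv8_7, cv7_3, cv7_4, cv7_5, cv7_6, cv6_2, cv6_3, cv6_4, cv6_5, cv5_2, cv5_3, cv5_4, cv4_2, cv4_3, cv3_2, Matrix.vecHead, Matrix.vecTail, Function.comp] <;>
      norm_num
  rw [key]; exact h
end

section
/- For all real numbers μ, a01, b01, c010, c011, c001, c101, c0101, c0110: if the matrix M1(μ, a01, b01, c010, c011, c001, c101, c0101, c0110) is positive semidefinite, then the following equalities hold: c101 = b01, c0101 = c001, c0110 = c001, c010 = (μ+2)/6, and c011 = a01 − (1−μ)/6. -/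
theorem stmt2 (μ a01 b01 c010 c011 c001 c101 c0101 c0110 : ℝ)
    (h : (M1 μ a01 b01 c010 c011 c001 c101 c0101 c0110).PosSemidef) :
    c101 = b01 ∧ c0101 = c001 ∧ c0110 = c001 ∧
      c010 = (μ + 2) / 6 ∧ c011 = a01 - (1 - μ) / 6 := by
  set M := M1 μ a01 b01 c010 c011 c001 c101 c0101 c0110 with hM
  have hv1 : M.mulVec ![1, 0, -1, 0, -1, 0, 0, 0, 1] = 0 := by
    rw [← h.dotProduct_mulVec_zero_iff]
    simp [hM, M1, Matrix.mulVec, dotProduct, Fin.sum_univ_succ]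
    ring
  have hv2 : M.mulVec ![0, 0, 0, 1, 0, 0, 0, -1, 0] = 0 := by
    rw [← h.dotProduct_mulVec_zero_iff]
    simp [hM, M1, Matrix.mulVec, dotProduct, Fin.sum_univ_succ]
  have e1 := congrArg (fun w => dotProduct ![0,0,0,0,1,0,0,0,0] w) hv2
  have e2 := congrArg (fun w => dotProduct ![0,0,0,0,0,1,0,0,0] w) hv2
  have e3 := congrArg (fun w => dotProduct ![0,0,0,0,0,0,1,0,0] w) hv2
  have e4 := congrArg (fun w => dotProduct ![0,1,0,0,0,0,0,0,0] w) hv1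
  have e5 := congrArg (fun w => dotProduct ![0,0,0,0,0,1,0,0,0] w) hv1
  simp [hM, M1, Matrix.mulVec, dotProduct, Fin.sum_univ_succ] at e1 e2 e3 e4 e5
  refine ⟨by linarith, by linarith, by linarith, by linarith, by linarith⟩
end

section
/- For every real number μ with 0 ≤ μ ≤ 1: if λ(μ) = (1/76)·((4√5−17)μ − 4√5 + 36 − √((160√5+1201)μ² − 16(√5−85)μ − 144√5 + 688)) satisfies λ(μ) ≥ 0, then μ ≤ 5√5 − 11. -/
theorem stmt10 (μ : ℝ) (hμ0 : 0 ≤ μ) (hμ1 : μ ≤ 1)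
    (h : 0 ≤ (1/76) * ((4 * Real.sqrt 5 - 17) * μ - 4 * Real.sqrt 5 + 36 -
      Real.sqrt ((160 * Real.sqrt 5 + 1201) * μ^2 -
        16 * (Real.sqrt 5 - 85) * μ - 144 * Real.sqrt 5 + 688))) :
    μ ≤ 5 * Real.sqrt 5 - 11 := by
  set s := Real.sqrt 5 with hs_def
  have hs : s ^ 2 = 5 := Real.sq_sqrt (by norm_num)
  have hs0 : 0 ≤ s := Real.sqrt_nonneg 5
  have hs2 : 2 ≤ s := by nlinarith
  have hs3 : s ≤ 3 := by nlinarith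
  set Q : ℝ := (160 * s + 1201) * μ^2 - 16 * (s - 85) * μ - 144 * s + 688 with hQ_def
  have hQ0 : 0 ≤ Q := by
    have : 0 ≤ (160 * s + 1201) * μ^2 := by positivity
    nlinarith
  have hsqQ : Real.sqrt Q ^ 2 = Q := Real.sq_sqrt hQ0
  have hAQ : Real.sqrt Q ≤ (4 * s - 17) * μ - 4 * s + 36 := by linarith
  have hQn : 0 ≤ Real.sqrt Q := Real.sqrt_nonneg Q
  have hQA2 : Q ≤ ((4 * s - 17) * μ - 4 * s + 36) ^ 2 := by nlinarith
  by_contra hc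
  push_neg at hc
  have h1 : 0 < (104 + 37 * s) * μ + 58 * s + 124 := by nlinarith
  have h2 : 0 < μ - (5 * s - 11) := by linarith
  nlinarith [mul_pos h1 h2]
end
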